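/- For any real matrices X ∈ ℝ^{m×r}, Y ∈ ℝ^{n×r}, and M ∈ ℝ^{m×n}: ‖X‖₂⁴ + ‖Y‖₂⁴ ≤ ‖XᵀX − YᵀY‖² + 2(‖XYᵀ − M‖ + ‖M‖)², where ‖·‖₂ is the spectral norm and ‖·‖ the Frobenius norm. -/

import Mathlib

open Matrix

attribute [local instance] Matrix.frobeniusNormedAddCommGroup Matrix.frobeniusNormedSpace

/-- The spectral (operator) norm of a real matrix, i.e. the operator norm of the
associated linear map between Euclidean spaces. -/
noncomputable def specNorm {m n : ℕ} (A : Matrix (Fin m) (Fin n) ℝ) : ℝ :=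
  ‖LinearMap.toContinuousLinearMap (Matrix.toEuclideanLin A)‖

lemma fro_sq {m n : ℕ} (A : Matrix (Fin m) (Fin n) ℝ) :
    ‖A‖ ^ 2 = ∑ i, ∑ j, (A i j) ^ 2 := by
  rw [Matrix.frobenius_norm_def, ← Real.rpow_natCast _ 2,
    ← Real.rpow_mul (by positivity)]
  norm_num

lemma spec_nonneg {m n : ℕ} (A : Matrix (Fin m) (Fin n) ℝ) : 0 ≤ specNorm A :=
  norm_nonneg _

lemma spec_mul_self {m r : ℕ} (X : Matrix (Fin m) (Fin r) ℝ) :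
    specNorm (Xᵀ * X) = specNorm X * specNorm X := by
  have h : Xᵀ * X = Xᴴ * X := by congr 1
  rw [h]
  exact Matrix.l2_opNorm_conjTranspose_mul_self X

lemma spec_le_fro {m n : ℕ} (A : Matrix (Fin m) (Fin n) ℝ) : specNorm A ≤ ‖A‖ := by
  refine ContinuousLinearMap.opNorm_le_bound _ (norm_nonneg A) fun x => ?_
  rw [← pow_le_pow_iff_left₀ (norm_nonneg _) (by positivity) (two_ne_zero)]
  have hx : ‖x‖ ^ 2 = ∑ j, (WithLp.equiv 2 (Fin n → ℝ) x j) ^ 2 := by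
    rw [EuclideanSpace.norm_eq, Real.sq_sqrt (by positivity)]
    simp [sq_abs]
  have hAx : ‖LinearMap.toContinuousLinearMap (Matrix.toEuclideanLin A) x‖ ^ 2 =
      ∑ i, (A *ᵥ (WithLp.equiv 2 (Fin n → ℝ) x)) i ^ 2 := by
    rw [EuclideanSpace.norm_eq, Real.sq_sqrt (by positivity)]
    simp [sq_abs]
  rw [hAx, mul_pow, fro_sq, hx]
  calc ∑ i, (A *ᵥ (WithLp.equiv 2 (Fin n → ℝ) x)) i ^ 2
      ≤ ∑ i, (∑ j, A i j ^ 2) * ∑ j, (WithLp.equiv 2 (Fin n → ℝ) x j) ^ 2 := by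
        refine Finset.sum_le_sum fun i _ => ?_
        simp only [Matrix.mulVec, dotProduct]
        exact Finset.sum_mul_sq_le_sq_mul_sq _ _ _
    _ = (∑ i, ∑ j, A i j ^ 2) * ∑ j, (WithLp.equiv 2 (Fin n → ℝ) x j) ^ 2 := by
        rw [Finset.sum_mul]

lemma cross_eq {m n r : ℕ} (X : Matrix (Fin m) (Fin r) ℝ) (Y : Matrix (Fin n) (Fin r) ℝ) :
    ∑ i, ∑ j, (Xᵀ * X) i j * (Yᵀ * Y) i j = ‖X * Yᵀ‖ ^ 2 := by
  rw [fro_sq]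
  simp only [Matrix.mul_apply, Matrix.transpose_apply, pow_two, Finset.sum_mul, Finset.mul_sum]
  conv_lhs => enter [2, i, 2, j]; rw [Finset.sum_comm]
  conv_lhs => enter [2, i]; rw [Finset.sum_comm]
  rw [Finset.sum_comm]
  conv_lhs => enter [2, a, 2, i]; rw [Finset.sum_comm]
  conv_lhs => enter [2, a]; rw [Finset.sum_comm]
  refine Finset.sum_congr rfl fun a _ => Finset.sum_congr rfl fun b _ =>
    Finset.sum_congr rfl fun i _ => Finset.sum_congr rfl fun j _ => by ring

theorem stmt4 {m n r : ℕ} (X : Matrix (Fin m) (Fin r) ℝ) (Y : Matrix (Fin n) (Fin r) ℝ)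
    (M : Matrix (Fin m) (Fin n) ℝ) :
    specNorm X ^ 4 + specNorm Y ^ 4 ≤
      ‖Xᵀ * X - Yᵀ * Y‖ ^ 2 + 2 * (‖X * Yᵀ - M‖ + ‖M‖) ^ 2 := by
  have hX4 : specNorm X ^ 4 ≤ ‖Xᵀ * X‖ ^ 2 := by
    calc specNorm X ^ 4 = specNorm (Xᵀ * X) ^ 2 := by rw [spec_mul_self]; ring
      _ ≤ ‖Xᵀ * X‖ ^ 2 := pow_le_pow_left₀ (spec_nonneg _) (spec_le_fro _) 2
  have hY4 : specNorm Y ^ 4 ≤ ‖Yᵀ * Y‖ ^ 2 := by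
    calc specNorm Y ^ 4 = specNorm (Yᵀ * Y) ^ 2 := by rw [spec_mul_self]; ring
      _ ≤ ‖Yᵀ * Y‖ ^ 2 := pow_le_pow_left₀ (spec_nonneg _) (spec_le_fro _) 2
  have key : ‖Xᵀ * X‖ ^ 2 + ‖Yᵀ * Y‖ ^ 2 =
      ‖Xᵀ * X - Yᵀ * Y‖ ^ 2 + 2 * ‖X * Yᵀ‖ ^ 2 := by
    rw [← cross_eq X Y, fro_sq, fro_sq, fro_sq]
    rw [Finset.mul_sum, ← Finset.sum_add_distrib, ← Finset.sum_add_distrib]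
    refine Finset.sum_congr rfl fun i _ => ?_
    rw [Finset.mul_sum, ← Finset.sum_add_distrib, ← Finset.sum_add_distrib]
    refine Finset.sum_congr rfl fun j _ => ?_
    simp only [Matrix.sub_apply]
    ring
  have tri : ‖X * Yᵀ‖ ≤ ‖X * Yᵀ - M‖ + ‖M‖ := by
    calc ‖X * Yᵀ‖ = ‖(X * Yᵀ - M) + M‖ := by rw [sub_add_cancel]
      _ ≤ ‖X * Yᵀ - M‖ + ‖M‖ := norm_add_le _ _
  have tri2 : ‖X * Yᵀ‖ ^ 2 ≤ (‖X * Yᵀ - M‖ + ‖M‖) ^ 2 :=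
    pow_le_pow_left₀ (norm_nonneg _) tri 2
  nlinarith [hX4, hY4, key, tri2]
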